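/- Fix θ0, θi1 ∈ ℂ, t1, t2 ∈ ℂ, and q1, p1, q2, p2 ∈ ℂ. Then there exist functions c1, c2 of ε (independent of q1, p1, q2, p2) such that, as ε → 0 with ε ≠ 0: (i) ε·HG311_1(θ0, 1/ε⁶, θi1; εt1 − 2/ε³, −t2/ε − 1/ε³; −εp1, q1/ε − 1/ε³, q2/ε, εp2) − c1(ε) converges to HG41_1(θ0, θi1; t1, t2; q1, p1, q2, p2); and (ii) −(1/ε)·HG311_2(with the same arguments) − c2(ε) converges to HG41_2(θ0, θi1; t1, t2; q1, p1, q2, p2). (Degeneration of the Garnier system 3+1+1 to the Garnier system 4+1.) -/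
import Mathlib


open Filter Topology

/-- Sixth Painlevé Hamiltonian `HVI(a,b,c,d;t;q,p)`. -/
noncomputable def HVI (a b c d t q p : ℂ) : ℂ :=
  (q * (q - 1) * (q - t) * p ^ 2
    + (d * q * (q - 1) - (2 * a + b + c + d) * q * (q - t) + c * (q - 1) * (q - t)) * p
    + a * (a + b) * (q - t)) / (t * (t - 1))

/-- Fifth Painlevé Hamiltonian `HV(a,b,c;t;q,p)`. -/
noncomputable def HV (a b c t q p : ℂ) : ℂ :=
  (p * (p + t) * q * (q - 1) + b * p * q + c * p - (a + c) * t * q) / t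

/-- Fourth Painlevé Hamiltonian `HIV(a,b;t;q,p)`. -/
noncomputable def HIV (a b t q p : ℂ) : ℂ := p * q * (p - q - t) + b * p + a * q

/-- Third Painlevé Hamiltonian `HIII(a,b;t;q,p)` (type D6). -/
noncomputable def HIII (a b t q p : ℂ) : ℂ :=
  (p ^ 2 * q ^ 2 - (q ^ 2 - b * q - t) * p - a * q) / t

/-- Second Painlevé Hamiltonian `HII(a;t;q,p)`. -/
noncomputable def HII (a t q p : ℂ) : ℂ := p ^ 2 - (q ^ 2 + t) * p - a * q

/-- Degenerate Garnier Hamiltonian of pattern 2+1+1+1 (first time variable). -/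
noncomputable def HG2111_1 (θ0 θ1 θt θi1 θi2 t1 t2 q1 p1 q2 p2 : ℂ) : ℂ :=
  HV (θ0 + θ1 + θi1) (2 * θ0 + θi1 + θi2) (-θ0 - θi1) t1 q1 p1
    + (p1 / t1) * (p2 * q2 * (q2 - 1) + θt * (q1 - q2))
    - (1 / (t1 - t2)) * (p1 * (q1 - q2) - θ1) * (p2 * (q1 - q2) + θt)

/-- Degenerate Garnier Hamiltonian of pattern 2+1+1+1 (second time variable). -/
noncomputable def HG2111_2 (θ0 θ1 θt θi1 θi2 t1 t2 q1 p1 q2 p2 : ℂ) : ℂ :=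
  HV (θ0 + θt + θi1) (2 * θ0 + θi1 + θi2) (-θ0 - θi1) t2 q2 p2
    + (p2 / t2) * (p1 * q1 * (q1 - 1) + θ1 * (q2 - q1))
    - (1 / (t2 - t1)) * (p1 * (q1 - q2) - θ1) * (p2 * (q1 - q2) + θt)

/-- Degenerate Garnier Hamiltonian of pattern 3+1+1 (first time variable). -/
noncomputable def HG311_1 (θ0 θ1 θi1 t1 t2 q1 p1 q2 p2 : ℂ) : ℂ :=
  HIV θ1 θi1 t1 q1 p1 + p1 * p2 * q2
    + (1 / (t1 - t2)) * (p1 * (q1 - q2) - θ1) * (p2 * (q2 - q1) - θ0)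

/-- Degenerate Garnier Hamiltonian of pattern 3+1+1 (second time variable). -/
noncomputable def HG311_2 (θ0 θ1 θi1 t1 t2 q1 p1 q2 p2 : ℂ) : ℂ :=
  HIV θ0 θi1 t2 q2 p2 + p1 * p2 * q1
    + (1 / (t2 - t1)) * (p1 * (q1 - q2) - θ1) * (p2 * (q2 - q1) - θ0)

/-- Degenerate Garnier Hamiltonian of pattern 2+2+1 (first time variable). -/
noncomputable def HG221_1 (θ0 θ1 θi2 t1 t2 q1 p1 q2 p2 : ℂ) : ℂ :=
  HV (-θi2) (θ0 - θ1) (θ1 + θi2) t1 q1 p1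
    + (1 / t1) * (q1 * q2 * (p1 * q1 - θ1) + p2 * q2 * (θ1 + p1 - 2 * p1 * q1))
    - (t2 / t1 ^ 2) * p1 * (p2 - q1)

/-- Degenerate Garnier Hamiltonian of pattern 2+2+1 (second time variable). -/
noncomputable def HG221_2 (θ0 θ1 θi2 t1 t2 q1 p1 q2 p2 : ℂ) : ℂ :=
  HIII θi2 (-θ0) t2 q2 p2
    + (1 / t2) * (-((p1 * q1 - θ1) * q2 * (q1 - 1)) + (t2 / t1) * p1 * (p2 - q1))

/-- Degenerate Garnier Hamiltonian of pattern 3+2 (first time variable). -/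
noncomputable def HG32_1 (θ0 θi1 t1 t2 q1 p1 q2 p2 : ℂ) : ℂ :=
  HIII (-θi1) (θ0 + 1) t1 q1 p1 - p1 - (q1 * q2 / t1) * (q2 - p2 + t2) + p1 * p2 - q2

/-- Degenerate Garnier Hamiltonian of pattern 3+2 (second time variable). -/
noncomputable def HG32_2 (θ0 θi1 t1 t2 q1 p1 q2 p2 : ℂ) : ℂ :=
  HIV θ0 θi1 t2 q2 p2 - p1 * q1 * (p2 - 2 * q2 - t2) - q1 * q2 + t1 * p1

/-- Degenerate Garnier Hamiltonian of pattern 4+1 (first time variable). -/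
noncomputable def HG41_1 (θ0 θi1 t1 t2 q1 p1 q2 p2 : ℂ) : ℂ :=
  HII (-θi1) t1 q1 p1 + p2 * q2 * (q1 - q2 + t2) + p1 * p2 + θ0 * q2

/-- Degenerate Garnier Hamiltonian of pattern 4+1 (second time variable). -/
noncomputable def HG41_2 (θ0 θi1 t1 t2 q1 p1 q2 p2 : ℂ) : ℂ :=
  -p2 ^ 2 * q2 - t2 * p2 * q2 ^ 2 + t2 ^ 2 * p2 * q2 + θ0 * t2 * q2 - θi1 * p2
    + p1 * p2 * (q1 - 2 * q2 + t2) + q1 * q2 * (p2 * q2 - θ0) + θ0 * p1 + t1 * p2 * q2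

/-- Degenerate Garnier Hamiltonian of pattern 5 (first time variable). -/
noncomputable def HG5_1 (θi1 t1 t2 q1 p1 q2 p2 : ℂ) : ℂ :=
  -q1 * (q1 * p1 - θi1) + q2 * (q1 * (p2 + q2) - 2 * p1 + t1) + p1 * (p2 - 2 * t2)

/-- Degenerate Garnier Hamiltonian of pattern 5 (second time variable). -/
noncomputable def HG5_2 (θi1 t1 t2 q1 p1 q2 p2 : ℂ) : ℂ :=
  HIV (-1) θi1 (2 * t2) q2 p2 + q1 * q2 * (q1 * q2 - 2 * p1 + t1)
    + p1 * (p1 - p2 * q1 - t1)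

private lemma key_tendsto (tgt : ℂ) (f N D : ℂ → ℂ) (hN : Continuous N) (hD : Continuous D)
    (hD0 : D 0 ≠ 0)
    (hfg : ∀ ε : ℂ, ε ≠ 0 → D ε ≠ 0 → f ε = tgt + ε ^ 2 * N ε / D ε) :
    Filter.Tendsto f (nhdsWithin (0 : ℂ) {(0 : ℂ)}ᶜ) (nhds tgt) := by
  have hDev : ∀ᶠ ε in nhdsWithin (0 : ℂ) {(0 : ℂ)}ᶜ, D ε ≠ 0 :=
    nhdsWithin_le_nhds (hD.continuousAt.eventually_ne hD0)
  have heq : (fun ε => tgt + ε ^ 2 * N ε / D ε) =ᶠ[nhdsWithin (0 : ℂ) {(0 : ℂ)}ᶜ] f := by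
    filter_upwards [hDev, self_mem_nhdsWithin] with ε h1 h2
    exact (hfg ε h2 h1).symm
  have h2 : Filter.Tendsto (fun ε : ℂ => tgt + ε ^ 2 * N ε / D ε) (nhds 0) (nhds tgt) := by
    have hc : ContinuousAt (fun ε : ℂ => tgt + ε ^ 2 * N ε / D ε) 0 :=
      continuousAt_const.add
        (((continuous_pow 2).continuousAt.mul hN.continuousAt).div hD.continuousAt hD0)
    simpa using hc.tendsto
  exact Filter.Tendsto.congr' heq (h2.mono_left nhdsWithin_le_nhds)

set_option maxHeartbeats 2000000 in
/-- Degeneration of the Garnier system 3+1+1 to the Garnier system 4+1. -/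
theorem stmt12 (θ0 θi1 : ℂ) (t1 t2 : ℂ) :
    (∃ c1 : ℂ → ℂ, ∀ q1 p1 q2 p2 : ℂ,
      Tendsto (fun ε : ℂ =>
          ε * HG311_1 θ0 (1 / ε ^ 6) θi1 (ε * t1 - 2 / ε ^ 3) (-t2 / ε - 1 / ε ^ 3)
              (-(ε * p1)) (q1 / ε - 1 / ε ^ 3) (q2 / ε) (ε * p2)
            - c1 ε)
        (𝓝[≠] (0 : ℂ))
        (𝓝 (HG41_1 θ0 θi1 t1 t2 q1 p1 q2 p2))) ∧
    (∃ c2 : ℂ → ℂ, ∀ q1 p1 q2 p2 : ℂ,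
      Tendsto (fun ε : ℂ =>
          -(1 / ε) * HG311_2 θ0 (1 / ε ^ 6) θi1 (ε * t1 - 2 / ε ^ 3) (-t2 / ε - 1 / ε ^ 3)
              (-(ε * p1)) (q1 / ε - 1 / ε ^ 3) (q2 / ε) (ε * p2)
            - c2 ε)
        (𝓝[≠] (0 : ℂ))
        (𝓝 (HG41_2 θ0 θi1 t1 t2 q1 p1 q2 p2))) := by
  constructor
  · refine ⟨fun ε => -(θ0 + θi1) / ε ^ 2 - θ0 * t2, fun q1 p1 q2 p2 => ?_⟩
    apply key_tendsto _ _ (fun ε => (2 * p1 * q2 * p2 - q1 * q2 ^ 2 * p2 + q1 * p1 ^ 2 + t2 * q2 ^ 2 * p2 - t2 * p1 * p2 - t2 ^ 2 * q2 * p2 - t1 * q2 * p2 - t1 * q1 * p1 - θ0 * p1 + θ0 * q1 * q2 - θ0 * t2 * q2 + θ0 * t2 ^ 2 + θ0 * t1 + ε ^ 2 * p1 ^ 2 * p2 - 2 * ε ^ 2 * q1 * p1 * q2 * p2 - ε ^ 2 * t2 * q1 * p1 ^ 2 + ε ^ 2 * t1 * q2 ^ 2 * p2 - ε ^ 2 *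 t1 * p1 * p2 - ε ^ 2 * t1 * t2 * q2 * p2 + ε ^ 2 * t1 * t2 * q1 * p1 + ε ^ 2 * θ0 * q1 * p1 - ε ^ 2 * θ0 * t1 * q2 + ε ^ 2 * θ0 * t1 * t2 - ε ^ 4 * q1 * p1 ^ 2 * p2 - ε ^ 4 * t1 * q1 * p1 ^ 2 + ε ^ 4 * t1 ^ 2 * q1 * p1))
      (fun ε => ε ^ 4 * t1 + ε ^ 2 * t2 - 1) (by fun_prop) (by fun_prop) (by norm_num)
    intro ε hε hD
    have hsub : ε * t1 - 2 / ε ^ 3 - (-t2 / ε - 1 / ε ^ 3)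
        = (ε ^ 4 * t1 + ε ^ 2 * t2 - 1) / ε ^ 3 := by
      field_simp
      ring
    simp only [HG311_1, HIV, HG41_1, HII, hsub]
    rw [one_div_div]
    linear_combination (norm := ring1) (p1 ^ 2 + q1 * q2 * p2 - q1 ^ 2 * p1 - t1 * p1 + θi1 * q1 + (ε ^ 4 * t1 + ε ^ 2 * t2 - 1)⁻¹ * q2 ^ 2 * p2 - (ε ^ 4 * t1 + ε ^ 2 * t2 - 1)⁻¹ * p1 * p2 - (ε ^ 4 * t1 + ε ^ 2 * t2 - 1)⁻¹ * t2 * q2 * p2 - (ε ^ 4 * t1 + ε ^ 2 * t2 - 1)⁻¹ * θ0 * q2 + (ε ^ 4 * t1 + ε ^ 2 * t2 - 1)⁻¹ * θ0 * t2 - ε⁻¹ ^ 2 * q2 * p2 - ε⁻¹ ^ 2 * θi1 - ε⁻¹ ^ 2 * (ε ^ 4 * t1 + ε ^ 2 * t2 - 1)⁻¹ * q2 * p2 + ε⁻¹ ^ 2 * (ε ^ 4 * t1 + ε ^ 2 * t2 - 1)⁻¹ * θ0 + ε * ε⁻¹ * p1 ^ 2 + ε * ε⁻¹ * q1 * q2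 * p2 - ε * ε⁻¹ * q1 ^ 2 * p1 - ε * ε⁻¹ * t1 * p1 + ε * ε⁻¹ * (ε ^ 4 * t1 + ε ^ 2 * t2 - 1)⁻¹ * q2 ^ 2 * p2 - ε * ε⁻¹ * (ε ^ 4 * t1 + ε ^ 2 * t2 - 1)⁻¹ * p1 * p2 - ε * ε⁻¹ * (ε ^ 4 * t1 + ε ^ 2 * t2 - 1)⁻¹ * t2 * q2 * p2 - ε * ε⁻¹ * (ε ^ 4 * t1 + ε ^ 2 * t2 - 1)⁻¹ * θ0 * q2 + ε * ε⁻¹ * (ε ^ 4 * t1 + ε ^ 2 * t2 - 1)⁻¹ * θ0 * t2 - ε * ε⁻¹ ^ 3 * q2 * p2 - ε * ε⁻¹ ^ 3 * (ε ^ 4 * t1 + ε ^ 2 * t2 - 1)⁻¹ * q2 * p2 + ε * ε⁻¹ ^ 3 * (ε ^ 4 * t1 + ε ^ 2 * t2 - 1)⁻¹ * θ0 - ε ^ 2 * q1 * p1 ^ 2 + ε ^ 2 * t1 * q1 * p1 + 2 * ε ^ 2 * (ε ^ 4 * t1 + ε ^ 2 * t2 - 1)⁻¹ * p1 * q2 *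 p2 - ε ^ 2 * (ε ^ 4 * t1 + ε ^ 2 * t2 - 1)⁻¹ * q1 * q2 ^ 2 * p2 - ε ^ 2 * (ε ^ 4 * t1 + ε ^ 2 * t2 - 1)⁻¹ * t1 * q2 * p2 - ε ^ 2 * (ε ^ 4 * t1 + ε ^ 2 * t2 - 1)⁻¹ * θ0 * p1 + ε ^ 2 * (ε ^ 4 * t1 + ε ^ 2 * t2 - 1)⁻¹ * θ0 * q1 * q2 + ε ^ 2 * (ε ^ 4 * t1 + ε ^ 2 * t2 - 1)⁻¹ * θ0 * t1 + ε ^ 2 * ε⁻¹ ^ 2 * p1 ^ 2 - ε ^ 2 * ε⁻¹ ^ 2 * t1 * p1 + ε ^ 2 * ε⁻¹ ^ 2 * (ε ^ 4 * t1 + ε ^ 2 * t2 - 1)⁻¹ * q2 ^ 2 * p2 - ε ^ 2 * ε⁻¹ ^ 2 * (ε ^ 4 * t1 + ε ^ 2 * t2 - 1)⁻¹ * p1 * p2 - ε ^ 2 * ε⁻¹ ^ 2 * (ε ^ 4 * t1 + ε ^ 2 * t2 - 1)⁻¹ * θ0 * q2 - ε ^ 2 * ε⁻¹ ^ 4 *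 (ε ^ 4 * t1 + ε ^ 2 * t2 - 1)⁻¹ * q2 * p2 + ε ^ 2 * ε⁻¹ ^ 4 * (ε ^ 4 * t1 + ε ^ 2 * t2 - 1)⁻¹ * θ0 + 2 * ε ^ 3 * ε⁻¹ * (ε ^ 4 * t1 + ε ^ 2 * t2 - 1)⁻¹ * p1 * q2 * p2 - ε ^ 3 * ε⁻¹ * (ε ^ 4 * t1 + ε ^ 2 * t2 - 1)⁻¹ * q1 * q2 ^ 2 * p2 - ε ^ 3 * ε⁻¹ * (ε ^ 4 * t1 + ε ^ 2 * t2 - 1)⁻¹ * t1 * q2 * p2 - ε ^ 3 * ε⁻¹ * (ε ^ 4 * t1 + ε ^ 2 * t2 - 1)⁻¹ * θ0 * p1 + ε ^ 3 * ε⁻¹ * (ε ^ 4 * t1 + ε ^ 2 * t2 - 1)⁻¹ * θ0 * q1 * q2 + ε ^ 3 * ε⁻¹ * (ε ^ 4 * t1 + ε ^ 2 * t2 - 1)⁻¹ * θ0 * t1 + ε ^ 3 * ε⁻¹ ^ 3 * (ε ^ 4 * t1 + ε ^ 2 * t2 - 1)⁻¹ * q2 ^ 2 * p2 - ε ^ 3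 * ε⁻¹ ^ 3 * (ε ^ 4 * t1 + ε ^ 2 * t2 - 1)⁻¹ * p1 * p2 - ε ^ 3 * ε⁻¹ ^ 3 * (ε ^ 4 * t1 + ε ^ 2 * t2 - 1)⁻¹ * θ0 * q2 - ε ^ 3 * ε⁻¹ ^ 5 * (ε ^ 4 * t1 + ε ^ 2 * t2 - 1)⁻¹ * q2 * p2 + ε ^ 3 * ε⁻¹ ^ 5 * (ε ^ 4 * t1 + ε ^ 2 * t2 - 1)⁻¹ * θ0 + ε ^ 4 * (ε ^ 4 * t1 + ε ^ 2 * t2 - 1)⁻¹ * p1 ^ 2 * p2 - 2 * ε ^ 4 * (ε ^ 4 * t1 + ε ^ 2 * t2 - 1)⁻¹ * q1 * p1 * q2 * p2 + ε ^ 4 * (ε ^ 4 * t1 + ε ^ 2 * t2 - 1)⁻¹ * θ0 * q1 * p1 + 2 * ε ^ 4 * ε⁻¹ ^ 2 * (ε ^ 4 * t1 + ε ^ 2 * t2 - 1)⁻¹ * p1 * q2 * p2 - ε ^ 4 * ε⁻¹ ^ 2 * (ε ^ 4 * t1 + ε ^ 2 * t2 - 1)⁻¹ * q1 * q2 ^ 2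 * p2 - ε ^ 4 * ε⁻¹ ^ 2 * (ε ^ 4 * t1 + ε ^ 2 * t2 - 1)⁻¹ * θ0 * p1 + ε ^ 4 * ε⁻¹ ^ 4 * (ε ^ 4 * t1 + ε ^ 2 * t2 - 1)⁻¹ * q2 ^ 2 * p2 - ε ^ 4 * ε⁻¹ ^ 4 * (ε ^ 4 * t1 + ε ^ 2 * t2 - 1)⁻¹ * p1 * p2 - ε ^ 4 * ε⁻¹ ^ 6 * (ε ^ 4 * t1 + ε ^ 2 * t2 - 1)⁻¹ * q2 * p2 + ε ^ 5 * ε⁻¹ * (ε ^ 4 * t1 + ε ^ 2 * t2 - 1)⁻¹ * p1 ^ 2 * p2 - 2 * ε ^ 5 * ε⁻¹ * (ε ^ 4 * t1 + ε ^ 2 * t2 - 1)⁻¹ * q1 * p1 * q2 * p2 + 2 * ε ^ 5 * ε⁻¹ ^ 3 * (ε ^ 4 * t1 + ε ^ 2 * t2 - 1)⁻¹ * p1 * q2 * p2 - ε ^ 5 * ε⁻¹ ^ 5 * (ε ^ 4 * t1 + ε ^ 2 * t2 - 1)⁻¹ * p1 * p2 - ε ^ 6 * (ε ^ 4 * t1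 + ε ^ 2 * t2 - 1)⁻¹ * q1 * p1 ^ 2 * p2 + ε ^ 6 * ε⁻¹ ^ 2 * (ε ^ 4 * t1 + ε ^ 2 * t2 - 1)⁻¹ * p1 ^ 2 * p2) * (mul_inv_cancel₀ hε)
      + (- q2 ^ 2 * p2 + p1 * p2 + t2 * q2 * p2 + θ0 * q2 - θ0 * t2 + ε⁻¹ ^ 2 * q2 * p2 - ε⁻¹ ^ 2 * θ0 + ε ^ 2 * q1 * p1 ^ 2 - ε ^ 2 * t1 * q1 * p1) * (mul_inv_cancel₀ hD)
  · refine ⟨fun ε => -θ0 / ε ^ 4 - θ0 * t2 / ε ^ 2 - θ0 * t1 - θ0 * t2 ^ 2, fun q1 p1 q2 p2 => ?_⟩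
    apply key_tendsto _ _ (fun ε => (- p1 ^ 2 * p2 + 2 * q1 * p1 * q2 * p2 - 2 * t2 * p1 * q2 * p2 + t2 * q1 * q2 ^ 2 * p2 - t2 ^ 2 * q2 ^ 2 * p2 + t2 ^ 2 * p1 * p2 + t2 ^ 3 * q2 * p2 - t1 * q2 ^ 2 * p2 + t1 * p1 * p2 + 2 * t1 * t2 * q2 * p2 - θ0 * q1 * p1 + θ0 * t2 * p1 - θ0 * t2 * q1 * q2 + θ0 * t2 ^ 2 * q2 - θ0 * t2 ^ 3 + θ0 * t1 * q2 - 2 * θ0 * t1 * t2 + ε ^ 2 * q1 * p1 ^ 2 * p2 - 2 * ε ^ 2 * t1 * p1 * q2 * p2 + ε ^ 2 * t1 * q1 * q2 ^ 2 * p2 - ε ^ 2 * t1 * t2 * q2 ^ 2 * p2 + ε ^ 2 * t1 * t2 * p1 * p2 + ε ^ 2 * t1 * t2 ^ 2 * q2 * p2 + ε ^ 2 * t1 ^ 2 * q2 * p2 + ε ^ 2 * θ0 * t1 * p1 - ε ^ 2 * θ0 * t1 * q1 * q2 + ε ^ 2 * θ0 * t1 * t2 * q2 - ε ^ 2 * θ0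 * t1 * t2 ^ 2 - ε ^ 2 * θ0 * t1 ^ 2))
      (fun ε => 1 - ε ^ 2 * t2 - ε ^ 4 * t1) (by fun_prop) (by fun_prop) (by norm_num)
    intro ε hε hD
    have hsub : -t2 / ε - 1 / ε ^ 3 - (ε * t1 - 2 / ε ^ 3)
        = (1 - ε ^ 2 * t2 - ε ^ 4 * t1) / ε ^ 3 := by
      field_simp
      ring
    simp only [HG311_2, HIV, HG41_2, hsub]
    rw [one_div_div]
    linear_combination (norm := ring1) (- q2 * p2 ^ 2 + q1 * p1 * p2 - θi1 * p2 - 2 * (1 - ε ^ 2 * t2 - ε ^ 4 * t1)⁻¹ * p1 * q2 * p2 + (1 - ε ^ 2 * t2 - ε ^ 4 * t1)⁻¹ * q1 * q2 ^ 2 * p2 - (1 - ε ^ 2 * t2 - ε ^ 4 * t1)⁻¹ * t2 * q2 ^ 2 * p2 + (1 - ε ^ 2 * t2 - ε ^ 4 * t1)⁻¹ * t2 * p1 * p2 + (1 - ε ^ 2 * t2 - ε ^ 4 * t1)⁻¹ * t2 ^ 2 * q2 * p2 + (1 - ε ^ 2 * t2 - ε ^ 4 * t1)⁻¹ * t1 *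 q2 * p2 + (1 - ε ^ 2 * t2 - ε ^ 4 * t1)⁻¹ * θ0 * p1 - (1 - ε ^ 2 * t2 - ε ^ 4 * t1)⁻¹ * θ0 * q1 * q2 + (1 - ε ^ 2 * t2 - ε ^ 4 * t1)⁻¹ * θ0 * t2 * q2 - (1 - ε ^ 2 * t2 - ε ^ 4 * t1)⁻¹ * θ0 * t2 ^ 2 - (1 - ε ^ 2 * t2 - ε ^ 4 * t1)⁻¹ * θ0 * t1 + ε⁻¹ ^ 2 * q2 ^ 2 * p2 - ε⁻¹ ^ 2 * p1 * p2 - ε⁻¹ ^ 2 * t2 * q2 * p2 - ε⁻¹ ^ 2 * (1 - ε ^ 2 * t2 - ε ^ 4 * t1)⁻¹ * q2 ^ 2 * p2 + ε⁻¹ ^ 2 * (1 - ε ^ 2 * t2 - ε ^ 4 * t1)⁻¹ * p1 * p2 + ε⁻¹ ^ 2 * (1 - ε ^ 2 * t2 - ε ^ 4 * t1)⁻¹ * t2 * q2 * p2 + ε⁻¹ ^ 2 * (1 - ε ^ 2 * t2 - ε ^ 4 * t1)⁻¹ * θ0 * q2 - ε⁻¹ ^ 2 * (1 - ε ^ 2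 * t2 - ε ^ 4 * t1)⁻¹ * θ0 * t2 - ε⁻¹ ^ 4 * q2 * p2 + ε⁻¹ ^ 4 * (1 - ε ^ 2 * t2 - ε ^ 4 * t1)⁻¹ * q2 * p2 - ε⁻¹ ^ 4 * (1 - ε ^ 2 * t2 - ε ^ 4 * t1)⁻¹ * θ0 - ε * ε⁻¹ * q2 * p2 ^ 2 + ε * ε⁻¹ * q1 * p1 * p2 - 2 * ε * ε⁻¹ * (1 - ε ^ 2 * t2 - ε ^ 4 * t1)⁻¹ * p1 * q2 * p2 + ε * ε⁻¹ * (1 - ε ^ 2 * t2 - ε ^ 4 * t1)⁻¹ * q1 * q2 ^ 2 * p2 - ε * ε⁻¹ * (1 - ε ^ 2 * t2 - ε ^ 4 * t1)⁻¹ * t2 * q2 ^ 2 * p2 + ε * ε⁻¹ * (1 - ε ^ 2 * t2 - ε ^ 4 * t1)⁻¹ * t2 * p1 * p2 + ε * ε⁻¹ * (1 - ε ^ 2 * t2 - ε ^ 4 * t1)⁻¹ * t2 ^ 2 * q2 * p2 + ε * ε⁻¹ * (1 - ε ^ 2 * t2 - ε ^ 4 * t1)⁻¹ * t1 * q2 *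 p2 + ε * ε⁻¹ * (1 - ε ^ 2 * t2 - ε ^ 4 * t1)⁻¹ * θ0 * p1 - ε * ε⁻¹ * (1 - ε ^ 2 * t2 - ε ^ 4 * t1)⁻¹ * θ0 * q1 * q2 + ε * ε⁻¹ * (1 - ε ^ 2 * t2 - ε ^ 4 * t1)⁻¹ * θ0 * t2 * q2 - ε * ε⁻¹ * (1 - ε ^ 2 * t2 - ε ^ 4 * t1)⁻¹ * θ0 * t2 ^ 2 - ε * ε⁻¹ * (1 - ε ^ 2 * t2 - ε ^ 4 * t1)⁻¹ * θ0 * t1 - ε * ε⁻¹ ^ 3 * p1 * p2 - ε * ε⁻¹ ^ 3 * (1 - ε ^ 2 * t2 - ε ^ 4 * t1)⁻¹ * q2 ^ 2 * p2 + ε * ε⁻¹ ^ 3 * (1 - ε ^ 2 * t2 - ε ^ 4 * t1)⁻¹ * p1 * p2 + ε * ε⁻¹ ^ 3 * (1 - ε ^ 2 * t2 - ε ^ 4 * t1)⁻¹ * t2 * q2 * p2 + ε * ε⁻¹ ^ 3 * (1 - ε ^ 2 * t2 - ε ^ 4 * t1)⁻¹ * θ0 * q2 - ε * ε⁻¹ ^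 3 * (1 - ε ^ 2 * t2 - ε ^ 4 * t1)⁻¹ * θ0 * t2 + ε * ε⁻¹ ^ 5 * (1 - ε ^ 2 * t2 - ε ^ 4 * t1)⁻¹ * q2 * p2 - ε * ε⁻¹ ^ 5 * (1 - ε ^ 2 * t2 - ε ^ 4 * t1)⁻¹ * θ0 - ε ^ 2 * (1 - ε ^ 2 * t2 - ε ^ 4 * t1)⁻¹ * p1 ^ 2 * p2 + 2 * ε ^ 2 * (1 - ε ^ 2 * t2 - ε ^ 4 * t1)⁻¹ * q1 * p1 * q2 * p2 - ε ^ 2 * (1 - ε ^ 2 * t2 - ε ^ 4 * t1)⁻¹ * t1 * q2 ^ 2 * p2 + ε ^ 2 * (1 - ε ^ 2 * t2 - ε ^ 4 * t1)⁻¹ * t1 * p1 * p2 + ε ^ 2 * (1 - ε ^ 2 * t2 - ε ^ 4 * t1)⁻¹ * t1 * t2 * q2 * p2 - ε ^ 2 * (1 - ε ^ 2 * t2 - ε ^ 4 * t1)⁻¹ * θ0 * q1 * p1 + ε ^ 2 * (1 - ε ^ 2 * t2 - ε ^ 4 * t1)⁻¹ * θ0 * t1 * q2 - ε ^ 2 *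 (1 - ε ^ 2 * t2 - ε ^ 4 * t1)⁻¹ * θ0 * t1 * t2 - 2 * ε ^ 2 * ε⁻¹ ^ 2 * (1 - ε ^ 2 * t2 - ε ^ 4 * t1)⁻¹ * p1 * q2 * p2 + ε ^ 2 * ε⁻¹ ^ 2 * (1 - ε ^ 2 * t2 - ε ^ 4 * t1)⁻¹ * q1 * q2 ^ 2 * p2 + ε ^ 2 * ε⁻¹ ^ 2 * (1 - ε ^ 2 * t2 - ε ^ 4 * t1)⁻¹ * t1 * q2 * p2 + ε ^ 2 * ε⁻¹ ^ 2 * (1 - ε ^ 2 * t2 - ε ^ 4 * t1)⁻¹ * θ0 * p1 - ε ^ 2 * ε⁻¹ ^ 2 * (1 - ε ^ 2 * t2 - ε ^ 4 * t1)⁻¹ * θ0 * q1 * q2 - ε ^ 2 * ε⁻¹ ^ 2 * (1 - ε ^ 2 * t2 - ε ^ 4 * t1)⁻¹ * θ0 * t1 - ε ^ 2 * ε⁻¹ ^ 4 * (1 - ε ^ 2 * t2 - ε ^ 4 * t1)⁻¹ * q2 ^ 2 * p2 + ε ^ 2 * ε⁻¹ ^ 4 * (1 - ε ^ 2 * t2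 - ε ^ 4 * t1)⁻¹ * p1 * p2 + ε ^ 2 * ε⁻¹ ^ 4 * (1 - ε ^ 2 * t2 - ε ^ 4 * t1)⁻¹ * θ0 * q2 + ε ^ 2 * ε⁻¹ ^ 6 * (1 - ε ^ 2 * t2 - ε ^ 4 * t1)⁻¹ * q2 * p2 - ε ^ 2 * ε⁻¹ ^ 6 * (1 - ε ^ 2 * t2 - ε ^ 4 * t1)⁻¹ * θ0 - ε ^ 3 * ε⁻¹ * (1 - ε ^ 2 * t2 - ε ^ 4 * t1)⁻¹ * p1 ^ 2 * p2 + 2 * ε ^ 3 * ε⁻¹ * (1 - ε ^ 2 * t2 - ε ^ 4 * t1)⁻¹ * q1 * p1 * q2 * p2 - ε ^ 3 * ε⁻¹ * (1 - ε ^ 2 * t2 - ε ^ 4 * t1)⁻¹ * t1 * q2 ^ 2 * p2 + ε ^ 3 * ε⁻¹ * (1 - ε ^ 2 * t2 - ε ^ 4 * t1)⁻¹ * t1 * p1 * p2 + ε ^ 3 * ε⁻¹ * (1 - ε ^ 2 * t2 - ε ^ 4 * t1)⁻¹ * t1 * t2 * q2 * p2 - ε ^ 3 * ε⁻¹ * (1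 - ε ^ 2 * t2 - ε ^ 4 * t1)⁻¹ * θ0 * q1 * p1 + ε ^ 3 * ε⁻¹ * (1 - ε ^ 2 * t2 - ε ^ 4 * t1)⁻¹ * θ0 * t1 * q2 - ε ^ 3 * ε⁻¹ * (1 - ε ^ 2 * t2 - ε ^ 4 * t1)⁻¹ * θ0 * t1 * t2 - 2 * ε ^ 3 * ε⁻¹ ^ 3 * (1 - ε ^ 2 * t2 - ε ^ 4 * t1)⁻¹ * p1 * q2 * p2 + ε ^ 3 * ε⁻¹ ^ 3 * (1 - ε ^ 2 * t2 - ε ^ 4 * t1)⁻¹ * q1 * q2 ^ 2 * p2 + ε ^ 3 * ε⁻¹ ^ 3 * (1 - ε ^ 2 * t2 - ε ^ 4 * t1)⁻¹ * t1 * q2 * p2 + ε ^ 3 * ε⁻¹ ^ 3 * (1 - ε ^ 2 * t2 - ε ^ 4 * t1)⁻¹ * θ0 * p1 - ε ^ 3 * ε⁻¹ ^ 3 * (1 - ε ^ 2 * t2 - ε ^ 4 * t1)⁻¹ * θ0 * t1 - ε ^ 3 * ε⁻¹ ^ 5 * (1 - ε ^ 2 * t2 - ε ^ 4 * t1)⁻¹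 * q2 ^ 2 * p2 + ε ^ 3 * ε⁻¹ ^ 5 * (1 - ε ^ 2 * t2 - ε ^ 4 * t1)⁻¹ * p1 * p2 + ε ^ 3 * ε⁻¹ ^ 7 * (1 - ε ^ 2 * t2 - ε ^ 4 * t1)⁻¹ * q2 * p2 + ε ^ 4 * (1 - ε ^ 2 * t2 - ε ^ 4 * t1)⁻¹ * q1 * p1 ^ 2 * p2 - ε ^ 4 * ε⁻¹ ^ 2 * (1 - ε ^ 2 * t2 - ε ^ 4 * t1)⁻¹ * p1 ^ 2 * p2 + 2 * ε ^ 4 * ε⁻¹ ^ 2 * (1 - ε ^ 2 * t2 - ε ^ 4 * t1)⁻¹ * q1 * p1 * q2 * p2 - 2 * ε ^ 4 * ε⁻¹ ^ 4 * (1 - ε ^ 2 * t2 - ε ^ 4 * t1)⁻¹ * p1 * q2 * p2 + ε ^ 4 * ε⁻¹ ^ 6 * (1 - ε ^ 2 * t2 - ε ^ 4 * t1)⁻¹ * p1 * p2 + ε ^ 5 * ε⁻¹ * (1 - ε ^ 2 * t2 - ε ^ 4 * t1)⁻¹ * q1 * p1 ^ 2 * p2 - ε ^ 5 * ε⁻¹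 ^ 3 * (1 - ε ^ 2 * t2 - ε ^ 4 * t1)⁻¹ * p1 ^ 2 * p2) * (mul_inv_cancel₀ hε)
      + (- 2 * p1 * q2 * p2 + q1 * q2 ^ 2 * p2 - t2 * q2 ^ 2 * p2 + t2 * p1 * p2 + t2 ^ 2 * q2 * p2 + t1 * q2 * p2 + θ0 * p1 - θ0 * q1 * q2 + θ0 * t2 * q2 - θ0 * t2 ^ 2 - θ0 * t1 - ε⁻¹ ^ 2 * q2 ^ 2 * p2 + ε⁻¹ ^ 2 * p1 * p2 + ε⁻¹ ^ 2 * t2 * q2 * p2 + ε⁻¹ ^ 2 * θ0 * q2 - ε⁻¹ ^ 2 * θ0 * t2 + ε⁻¹ ^ 4 * q2 * p2 - ε⁻¹ ^ 4 * θ0) * (mul_inv_cancel₀ hD)
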